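/- There is an absolute constant D > 0 such that for every H ∈ (0,1) with H ≠ 1/2, every t ∈ [0,1] and every integer j ≥ 0, the coefficients g_n(t,H) at level j satisfy ∑_{k=0}^{2^j − 1} g_{2^j + k}(t,H)² ≤ (D / (2^{2j(1−H)} · (H − 1/2)²)) · ∑_{ℓ=1}^∞ ℓ^{−(2H+1)}. -/

import Mathlib

open MeasureTheory ProbabilityTheory Real Filter

noncomputable section

/-- The mother Haar wavelet: 1 on [0,1/2), -1 on [1/2,1], 0 otherwise. -/
def haarMother (s : ℝ) : ℝ :=
  if s ∈ Set.Ico (0 : ℝ) (1/2) then 1 else if s ∈ Set.Icc (1/2 : ℝ) 1 then -1 else 0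

/-- The Haar orthonormal basis of L²[0,1]: `haarFun 0 = 1` on `[0,1]`, and for
`n = 2^j + k` with `0 ≤ k < 2^j`, `haarFun n s = 2^(j/2) * haarMother (2^j * s - k)`. -/
def haarFun (n : ℕ) (s : ℝ) : ℝ :=
  if n = 0 then (if s ∈ Set.Icc (0 : ℝ) 1 then 1 else 0)
  else (2 : ℝ) ^ ((Nat.log2 n : ℝ) / 2) *
    haarMother ((2 : ℝ) ^ (Nat.log2 n : ℕ) * s - ((n - 2 ^ Nat.log2 n : ℕ) : ℝ))

/-- Inner product on L²[0,1]. -/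
def innerUnit (f g : ℝ → ℝ) : ℝ := ∫ s in (0 : ℝ)..1, f s * g s

/-- Inner product on L²[-1,0]. -/
def innerNeg (f g : ℝ → ℝ) : ℝ := ∫ s in (-1 : ℝ)..0, f s * g s

/-- The Haar orthonormal basis of L²[-1,0]. -/
def haarFunNeg (n : ℕ) (s : ℝ) : ℝ := haarFun n (s + 1)

/-- `f_t^{(1)}(s) = (t-s)^(H-1/2)` for `s ∈ [0,t)`, `0` otherwise. -/
def f1 (H t : ℝ) (s : ℝ) : ℝ := if 0 ≤ s ∧ s < t then (t - s) ^ (H - 1/2) else 0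

/-- `f_t^{(2)}(s) = (t-s)^(H-1/2) - (-s)^(H-1/2)` for `s ∈ [-1,0)`, `0` otherwise. -/
def f2 (H t : ℝ) (s : ℝ) : ℝ :=
  if -1 ≤ s ∧ s < 0 then (t - s) ^ (H - 1/2) - (-s) ^ (H - 1/2) else 0

/-- Haar coefficient `⟨f_t^{(1)}, ℋ_n⟩`. -/
def coeff1 (H t : ℝ) (n : ℕ) : ℝ := innerUnit (f1 H t) (haarFun n)

/-- Haar coefficient `⟨f_t^{(2)}, ℋ̃_n⟩`. -/
def coeff2 (H t : ℝ) (n : ℕ) : ℝ := innerNeg (f2 H t) (haarFunNeg n)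

/-- `g_n(t,H) = ∫₀¹ ((t + 1/x)^(H-3/2) - (1/x)^(H-3/2)) x⁻³ (∫₀ˣ ℋ_n(y) dy) dx`. -/
def gCoeff (H t : ℝ) (n : ℕ) : ℝ :=
  ∫ x in (0 : ℝ)..1,
    ((t + x⁻¹) ^ (H - 3/2) - (x⁻¹) ^ (H - 3/2)) * (x⁻¹) ^ (3 : ℕ) *
      (∫ y in (0 : ℝ)..x, haarFun n y)

/-- `C_H = 1/Γ(H + 1/2)`. -/
def CH (H : ℝ) : ℝ := 1 / Real.Gamma (H + 1/2)

/-!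
Write `gCoeff H t n = ∫₀¹ K(x) Φₙ(x) dx` with `Φₙ` the primitive of the Haar function. The
mean value theorem gives `|K(x)| ≤ (3/2 - H) t x^{-(H+1/2)}`, and for `n = 2^j + k` the primitive
is the tent `2^{-j/2} tent (2^j x - k)`, supported on `[k 2^{-j}, (k+1) 2^{-j}]` and bounded by
`2^{-j/2}/2`. For `k ≥ 1` this gives `|g_n| ≤ C k^{-(H+1/2)} 2^{-j(1-H)}`; for `k = 0` the kernel
is not bounded on the support, and one uses `tent u ≤ u` and integrates `x^{1/2-H}` instead.
Squaring and summing over `k` gives the claim with `D = 9/4`, because `(H - 1/2)² ≤ 1/4`.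
-/

open Set

def tent (u : ℝ) : ℝ := max 0 (min u (1 - u))

lemma tent_nonneg (u : ℝ) : 0 ≤ tent u := le_max_left _ _

lemma tent_le_half (u : ℝ) : tent u ≤ 1 / 2 :=
  max_le (by norm_num) <| (le_total u (1 / 2)).elim (fun h => (min_le_left _ _).trans h)
    fun h => (min_le_right _ _).trans (by linarith)

lemma tent_le_self {u : ℝ} (hu : 0 ≤ u) : tent u ≤ u := max_le hu (min_le_left _ _)

lemma tent_of_nonpos {u : ℝ} (hu : u ≤ 0) : tent u = 0 :=
  max_eq_left ((min_le_left _ _).trans hu)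

lemma tent_of_one_le {u : ℝ} (hu : 1 ≤ u) : tent u = 0 :=
  max_eq_left ((min_le_right _ _).trans (by linarith))

lemma intervalIntegral.integral_eq_of_eqOn_Ioo {f : ℝ → ℝ} {a b c : ℝ} (hab : a ≤ b)
    (hf : ∀ x ∈ Ioo a b, f x = c) : ∫ x in a..b, f x = (b - a) * c := by
  rw [intervalIntegral.integral_of_le hab, integral_Ioc_eq_integral_Ioo,
    setIntegral_congr_fun measurableSet_Ioo hf, setIntegral_const,
    Real.volume_real_Ioo_of_le hab, smul_eq_mul]

lemma intervalIntegrable_haarMother (a b : ℝ) : IntervalIntegrable haarMother volume a b := by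
  refine (intervalIntegrable_const (c := (1 : ℝ))).mono_fun' ?_ (ae_of_all _ fun s => ?_)
  · unfold haarMother
    exact (Measurable.ite measurableSet_Ico measurable_const
      (Measurable.ite measurableSet_Icc measurable_const measurable_const)).aestronglyMeasurable
  · dsimp only [haarMother]
    split_ifs <;> norm_num

lemma integral_haarMother (u : ℝ) : ∫ s in (0 : ℝ)..u, haarMother s = tent u := by
  have hI := intervalIntegrable_haarMother
  have h₁ : ∀ {a b : ℝ}, 0 ≤ a → a ≤ b → b ≤ 1 / 2 → ∫ s in a..b, haarMother s = b - a :=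
    fun ha hab hb => by
      rw [intervalIntegral.integral_eq_of_eqOn_Ioo (c := 1) hab fun x hx => ?_, mul_one]
      simp only [haarMother, mem_Ico]
      rw [if_pos ⟨by linarith [hx.1], by linarith [hx.2]⟩]
  have h₂ : ∀ {b : ℝ}, 1 / 2 ≤ b → b ≤ 1 → ∫ s in (1 / 2)..b, haarMother s = 1 / 2 - b :=
    fun hb₀ hb₁ => by
      rw [intervalIntegral.integral_eq_of_eqOn_Ioo (c := -1) hb₀ fun x hx => ?_]
      · ring
      simp only [haarMother, mem_Ico, mem_Icc]
      rw [if_neg (by intro h; linarith [hx.1, h.2]),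
        if_pos ⟨by linarith [hx.1], by linarith [hx.2]⟩]
  have h₀ : ∀ {a b : ℝ}, a ≤ b → (b ≤ 0 ∨ 1 ≤ a) → ∫ s in a..b, haarMother s = 0 :=
    fun hab h => by
      rw [intervalIntegral.integral_eq_of_eqOn_Ioo (c := 0) hab fun x hx => ?_, mul_zero]
      simp only [haarMother, mem_Ico, mem_Icc]
      rw [if_neg (by intro h'; rcases h with h | h <;> linarith [hx.1, hx.2, h'.1, h'.2]),
        if_neg (by intro h'; rcases h with h | h <;> linarith [hx.1, hx.2, h'.1, h'.2])]
  rcases le_total u 0 with hu | hu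
  · rw [intervalIntegral.integral_symm, h₀ hu (Or.inl le_rfl), tent_of_nonpos hu, neg_zero]
  rcases le_total u (1 / 2) with hu' | hu'
  · rw [h₁ le_rfl hu hu', tent, min_eq_left (by linarith), max_eq_right hu, sub_zero]
  rw [← intervalIntegral.integral_add_adjacent_intervals (hI _ _) (hI _ _),
    h₁ le_rfl (by norm_num) le_rfl]
  rcases le_total u 1 with hu'' | hu''
  · rw [h₂ hu' hu'', tent, min_eq_right (by linarith), max_eq_right (by linarith)]
    ring
  rw [← intervalIntegral.integral_add_adjacent_intervals (hI (1 / 2) 1) (hI 1 u),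
    h₂ (by norm_num) le_rfl, h₀ hu'' (Or.inr le_rfl), tent_of_one_le hu'']
  norm_num

lemma Nat.log2_two_pow_add {j k : ℕ} (hk : k < 2 ^ j) : Nat.log2 (2 ^ j + k) = j := by
  rw [Nat.log2_eq_log_two]
  exact Nat.log_eq_of_pow_le_of_lt_pow (Nat.le_add_right _ _) (by rw [Nat.pow_succ]; omega)

lemma haarFun_two_pow_add {j k : ℕ} (hk : k < 2 ^ j) (y : ℝ) :
    haarFun (2 ^ j + k) y = √(2 ^ j) * haarMother (2 ^ j * y - k) := by
  rw [haarFun, if_neg (by positivity), Nat.log2_two_pow_add hk, Real.sqrt_eq_rpow,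
    ← Real.rpow_natCast, ← Real.rpow_mul zero_le_two, Nat.add_sub_cancel_left]
  ring_nf

lemma integral_haarFun_two_pow_add {j k : ℕ} (hk : k < 2 ^ j) (x : ℝ) :
    ∫ y in (0 : ℝ)..x, haarFun (2 ^ j + k) y = tent (2 ^ j * x - k) / √(2 ^ j) := by
  have hp : (2 : ℝ) ^ j ≠ 0 := by positivity
  simp_rw [haarFun_two_pow_add hk, intervalIntegral.integral_const_mul,
    intervalIntegral.integral_comp_mul_sub (fun y => haarMother y) hp, mul_zero, zero_sub]
  rw [← intervalIntegral.integral_interval_sub_left (intervalIntegrable_haarMother 0 _)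
      (intervalIntegrable_haarMother 0 _), integral_haarMother, integral_haarMother,
    tent_of_nonpos (neg_nonpos.2 (Nat.cast_nonneg k)), sub_zero, smul_eq_mul]
  field_simp
  rw [Real.sq_sqrt (by positivity)]

lemma abs_add_rpow_neg_sub_rpow_neg_le {a u t : ℝ} (ha : 0 ≤ a) (hu : 0 < u) (ht : 0 ≤ t) :
    |(t + u) ^ (-a) - u ^ (-a)| ≤ a * t * u ^ (-a - 1) := by
  have hderiv : ∀ s ∈ Icc u (u + t),
      HasDerivWithinAt (fun s : ℝ => s ^ (-a)) (-a * s ^ (-a - 1)) (Icc u (u + t)) s :=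
    fun s hs => (Real.hasDerivAt_rpow_const (Or.inl (hu.trans_le hs.1).ne')).hasDerivWithinAt
  have hbound : ∀ s ∈ Icc u (u + t), ‖-a * s ^ (-a - 1)‖ ≤ a * u ^ (-a - 1) := fun s hs => by
    rw [norm_mul, norm_neg, Real.norm_of_nonneg ha,
      Real.norm_of_nonneg (Real.rpow_nonneg (hu.le.trans hs.1) _)]
    exact mul_le_mul_of_nonneg_left (Real.rpow_le_rpow_of_nonpos hu hs.1 (by linarith)) ha
  have := (convex_Icc u (u + t)).norm_image_sub_le_of_norm_hasDerivWithin_le hderiv hbound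
    (left_mem_Icc.2 (by linarith)) (right_mem_Icc.2 (by linarith))
  rw [Real.norm_eq_abs, Real.norm_eq_abs, add_sub_cancel_left, abs_of_nonneg ht, add_comm] at this
  linarith

def gKernel (H t x : ℝ) : ℝ := ((t + x⁻¹) ^ (H - 3/2) - (x⁻¹) ^ (H - 3/2)) * (x⁻¹) ^ (3 : ℕ)

lemma gCoeff_eq (H t : ℝ) (n : ℕ) :
    gCoeff H t n = ∫ x in (0 : ℝ)..1, gKernel H t x * ∫ y in (0 : ℝ)..x, haarFun n y := rfl

lemma abs_gKernel_le {H t x : ℝ} (hH : H ≤ 3 / 2) (ht : 0 ≤ t) (hx : 0 < x) :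
    |gKernel H t x| ≤ (3 / 2 - H) * t * x ^ (-(H + 1 / 2)) := by
  have hx' : 0 < x⁻¹ := inv_pos.2 hx
  have hdiff := abs_add_rpow_neg_sub_rpow_neg_le (a := 3 / 2 - H) (by linarith) hx' ht
  rw [neg_sub] at hdiff
  have hpow : (x⁻¹) ^ (H - 3 / 2 - 1) * (x⁻¹) ^ (3 : ℕ) = x ^ (-(H + 1 / 2)) := by
    rw [← Real.rpow_natCast, ← Real.rpow_add hx', Real.inv_rpow hx.le, ← Real.rpow_neg hx.le]
    congr 1
    push_cast
    ring
  rw [gKernel, abs_mul, abs_of_pos (pow_pos hx' 3), ← hpow, ← mul_assoc]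
  exact mul_le_mul_of_nonneg_right (by simpa [sub_sub] using hdiff) (pow_pos hx' 3).le

lemma abs_intervalIntegral_le_of_eq_zero_off {f g : ℝ → ℝ} {a b c d : ℝ} (hca : c ≤ a)
    (hab : a ≤ b) (hbd : b ≤ d) (hg : IntervalIntegrable g volume a b)
    (hfg : ∀ x ∈ Ioc a b, |f x| ≤ g x) (hf : ∀ x ∈ Ioc c d, x ∉ Ioc a b → f x = 0) :
    |∫ x in c..d, f x| ≤ ∫ x in a..b, g x := by
  rw [intervalIntegral.integral_of_le (hca.trans (hab.trans hbd)),
    setIntegral_eq_of_subset_of_forall_sdiff_eq_zero measurableSet_Ioc (Ioc_subset_Ioc hca hbd)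
      fun x hx => hf x hx.1 hx.2, ← intervalIntegral.integral_of_le hab]
  exact intervalIntegral.norm_integral_le_of_norm_le hab
    (ae_of_all _ fun x hx => (Real.norm_eq_abs (f x)).trans_le (hfg x hx)) hg

lemma abs_gCoeff_two_pow_le {H t : ℝ} (hH : H < 3 / 2) (ht : 0 ≤ t) (j : ℕ) :
    |gCoeff H t (2 ^ j)| ≤ t * ((2 : ℝ) ^ j) ^ (H - 1) := by
  set p : ℝ := 2 ^ j
  have hp : 0 < p := by positivity
  have hprim : ∀ x, ∫ y in (0 : ℝ)..x, haarFun (2 ^ j) y = tent (p * x) / √p := by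
    simpa using integral_haarFun_two_pow_add (j := j) (k := 0) (by positivity)
  have hint : IntervalIntegrable (fun x => (3 / 2 - H) * t * √p * x ^ (1 / 2 - H)) volume 0 p⁻¹ :=
    (intervalIntegral.intervalIntegrable_rpow' (by linarith)).const_mul _
  have hpt : ∀ x ∈ Ioc 0 p⁻¹,
      |gKernel H t x * (tent (p * x) / √p)| ≤ (3 / 2 - H) * t * √p * x ^ (1 / 2 - H) := by
    intro x hx
    have htent : tent (p * x) / √p ≤ √p * x := by
      rw [div_le_iff₀ (by positivity), mul_right_comm, Real.mul_self_sqrt hp.le]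
      exact tent_le_self (by nlinarith [hx.1])
    rw [abs_mul, abs_of_nonneg (div_nonneg (tent_nonneg _) (Real.sqrt_nonneg _)),
      show 1 / 2 - H = -(H + 1 / 2) + 1 by ring, Real.rpow_add_one hx.1.ne']
    calc |gKernel H t x| * (tent (p * x) / √p)
        ≤ (3 / 2 - H) * t * x ^ (-(H + 1 / 2)) * (√p * x) :=
          mul_le_mul (abs_gKernel_le hH.le ht hx.1) htent
            (div_nonneg (tent_nonneg _) (Real.sqrt_nonneg _))
            (mul_nonneg (mul_nonneg (by linarith) ht) (Real.rpow_nonneg hx.1.le _))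
      _ = (3 / 2 - H) * t * √p * (x ^ (-(H + 1 / 2)) * x) := by ring
  have hzero : ∀ x ∈ Ioc (0 : ℝ) 1, x ∉ Ioc 0 p⁻¹ → gKernel H t x * (tent (p * x) / √p) = 0 := by
    intro x hx hx'
    have hpx : p⁻¹ < x := by simpa [hx.1] using hx'
    have : 1 ≤ p * x := by
      simpa [hp.ne'] using (mul_lt_mul_of_pos_left hpx hp).le
    rw [tent_of_one_le this, zero_div, mul_zero]
  calc |gCoeff H t (2 ^ j)|
      ≤ ∫ x in (0 : ℝ)..p⁻¹, (3 / 2 - H) * t * √p * x ^ (1 / 2 - H) := by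
        rw [gCoeff_eq]
        simp_rw [hprim]
        exact abs_intervalIntegral_le_of_eq_zero_off le_rfl (by positivity)
          (inv_le_one_of_one_le₀ (one_le_pow₀ one_le_two)) hint hpt hzero
    _ = t * √p * p⁻¹ ^ (3 / 2 - H) := by
        rw [intervalIntegral.integral_const_mul, integral_rpow (Or.inl (by linarith)),
          Real.zero_rpow (by linarith), sub_zero, show 1 / 2 - H + 1 = 3 / 2 - H by ring]
        field_simp [(by linarith : 0 < 3 - 2 * H).ne']
    _ = t * p ^ (H - 1) := by
        rw [Real.sqrt_eq_rpow, Real.inv_rpow hp.le, ← Real.rpow_neg hp.le, mul_assoc,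
          ← Real.rpow_add hp]
        ring_nf

lemma abs_gCoeff_two_pow_add_le {H t : ℝ} (hH₀ : -(1 / 2) ≤ H) (hH : H ≤ 3 / 2) (ht : 0 ≤ t)
    {j k : ℕ} (hk₀ : 0 < k) (hk : k < 2 ^ j) :
    |gCoeff H t (2 ^ j + k)|
      ≤ (3 / 2 - H) / 2 * t * (k : ℝ) ^ (-(H + 1 / 2)) * ((2 : ℝ) ^ j) ^ (H - 1) := by
  set p : ℝ := 2 ^ j with hp_def
  have hp : 0 < p := by positivity
  have hkp : 0 < (k : ℝ) / p := by positivity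
  have hpt : ∀ x ∈ Ioc ((k : ℝ) / p) ((k + 1) / p),
      |gKernel H t x * (tent (p * x - k) / √p)| ≤
        (3 / 2 - H) * t * ((k : ℝ) / p) ^ (-(H + 1 / 2)) * (1 / 2 / √p) := by
    intro x hx
    have hx₀ : 0 < x := hkp.trans hx.1
    rw [abs_mul, abs_of_nonneg (div_nonneg (tent_nonneg _) (Real.sqrt_nonneg _))]
    refine mul_le_mul ((abs_gKernel_le hH ht hx₀).trans (mul_le_mul_of_nonneg_left
        (Real.rpow_le_rpow_of_nonpos hkp hx.1.le (by linarith)) (mul_nonneg (by linarith) ht)))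
      (div_le_div_of_nonneg_right (tent_le_half _) (Real.sqrt_nonneg _))
      (div_nonneg (tent_nonneg _) (Real.sqrt_nonneg _))
      (mul_nonneg (mul_nonneg (by linarith) ht) (Real.rpow_nonneg hkp.le _))
  have hzero : ∀ x ∈ Ioc (0 : ℝ) 1, x ∉ Ioc ((k : ℝ) / p) ((k + 1) / p) →
      gKernel H t x * (tent (p * x - k) / √p) = 0 := by
    intro x _ hx
    rw [mem_Ioc, not_and_or, not_lt, not_le, div_lt_iff₀ hp, le_div_iff₀ hp] at hx
    rcases hx with hx | hx
    · rw [tent_of_nonpos (by linarith), zero_div, mul_zero]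
    · rw [tent_of_one_le (by linarith), zero_div, mul_zero]
  have hk₁ : ((k : ℝ) + 1) / p ≤ 1 := by
    rw [div_le_one hp, hp_def]
    exact_mod_cast hk
  calc |gCoeff H t (2 ^ j + k)|
      ≤ ∫ _ in (k : ℝ) / p..(k + 1) / p,
          (3 / 2 - H) * t * ((k : ℝ) / p) ^ (-(H + 1 / 2)) * (1 / 2 / √p) := by
        rw [gCoeff_eq]
        simp_rw [integral_haarFun_two_pow_add hk]
        exact abs_intervalIntegral_le_of_eq_zero_off hkp.le (by gcongr; linarith) hk₁
          intervalIntegrable_const hpt hzero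
    _ = (3 / 2 - H) / 2 * t * (k : ℝ) ^ (-(H + 1 / 2)) * p ^ (H - 1) := by
        have hpow : p ^ (-(H + 1 / 2)) * √p * p = (p ^ (H - 1))⁻¹ := by
          rw [Real.sqrt_eq_rpow, ← Real.rpow_add hp, ← Real.rpow_add_one hp.ne',
            ← Real.rpow_neg hp.le]
          ring_nf
        rw [intervalIntegral.integral_const, smul_eq_mul, Real.div_rpow (Nat.cast_nonneg k) hp.le,
          ← sub_div, add_sub_cancel_left, ← inv_inv (p ^ (H - 1)), ← hpow]
        field_simp

lemma Real.rpow_neg_le_two_rpow_mul_add_one_rpow_neg {k a : ℝ} (hk : 1 ≤ k) (ha : 0 ≤ a) :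
    k ^ (-a) ≤ 2 ^ a * (k + 1) ^ (-a) :=
  calc k ^ (-a) = 2 ^ a * (2 * k) ^ (-a) := by
        rw [Real.mul_rpow zero_le_two (by linarith), ← mul_assoc, ← Real.rpow_add two_pos,
          add_neg_cancel, Real.rpow_zero, one_mul]
    _ ≤ 2 ^ a * (k + 1) ^ (-a) := mul_le_mul_of_nonneg_left
        (Real.rpow_le_rpow_of_nonpos (x := k + 1) (by linarith) (by linarith) (by linarith))
        (by positivity)

lemma abs_gCoeff_two_pow_add_le_add_one {H t : ℝ} (hH₀ : 0 ≤ H) (hH : H < 3 / 2) (ht : 0 ≤ t)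
    {j k : ℕ} (hk : k < 2 ^ j) :
    |gCoeff H t (2 ^ j + k)|
      ≤ 3 * t * ((k : ℝ) + 1) ^ (-(H + 1 / 2)) * ((2 : ℝ) ^ j) ^ (H - 1) := by
  have hP : 0 ≤ ((2 : ℝ) ^ j) ^ (H - 1) := by positivity
  rcases Nat.eq_zero_or_pos k with rfl | hk₀
  · have := abs_gCoeff_two_pow_le hH ht j
    simp only [add_zero, CharP.cast_eq_zero, zero_add, Real.one_rpow, mul_one]
    nlinarith [mul_nonneg ht hP]
  have hk₁ : (1 : ℝ) ≤ k := by exact_mod_cast hk₀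
  have h2 : (2 : ℝ) ^ (H + 1 / 2) ≤ 4 := by
    calc (2 : ℝ) ^ (H + 1 / 2) ≤ 2 ^ (2 : ℝ) :=
          Real.rpow_le_rpow_of_exponent_le one_le_two (by linarith)
      _ = 4 := by norm_num
  calc |gCoeff H t (2 ^ j + k)|
      ≤ (3 / 2 - H) / 2 * t * (k : ℝ) ^ (-(H + 1 / 2)) * ((2 : ℝ) ^ j) ^ (H - 1) :=
        abs_gCoeff_two_pow_add_le (by linarith) hH.le ht hk₀ hk
    _ ≤ 3 / 4 * t * (4 * ((k : ℝ) + 1) ^ (-(H + 1 / 2))) * ((2 : ℝ) ^ j) ^ (H - 1) := by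
        have hk' : (k : ℝ) ^ (-(H + 1 / 2)) ≤ 4 * ((k : ℝ) + 1) ^ (-(H + 1 / 2)) :=
          (Real.rpow_neg_le_two_rpow_mul_add_one_rpow_neg hk₁ (by linarith)).trans
            (mul_le_mul_of_nonneg_right h2 (by positivity))
        exact mul_le_mul_of_nonneg_right (mul_le_mul (mul_le_mul_of_nonneg_right (by linarith) ht)
          hk' (by positivity) (by positivity)) hP
    _ = 3 * t * ((k : ℝ) + 1) ^ (-(H + 1 / 2)) * ((2 : ℝ) ^ j) ^ (H - 1) := by ring

lemma sq_gCoeff_two_pow_add_le {H t : ℝ} (hH₀ : 0 ≤ H) (hH : H < 3 / 2) (ht₀ : 0 ≤ t)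
    (ht₁ : t ≤ 1) {j k : ℕ} (hk : k < 2 ^ j) :
    gCoeff H t (2 ^ j + k) ^ 2
      ≤ 9 / (2 : ℝ) ^ (2 * (j : ℝ) * (1 - H)) * ((k : ℝ) + 1) ^ (-(2 * H + 1)) := by
  have hpow : (((k : ℝ) + 1) ^ (-(H + 1 / 2))) ^ 2 = ((k : ℝ) + 1) ^ (-(2 * H + 1)) := by
    rw [← Real.rpow_natCast, ← Real.rpow_mul (by positivity)]
    ring_nf
  have hpow' : (((2 : ℝ) ^ j) ^ (H - 1)) ^ 2 = ((2 : ℝ) ^ (2 * (j : ℝ) * (1 - H)))⁻¹ := by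
    rw [← Real.rpow_natCast, ← Real.rpow_natCast, ← Real.rpow_mul zero_le_two,
      ← Real.rpow_mul (by positivity), ← Real.rpow_neg zero_le_two]
    ring_nf
  calc gCoeff H t (2 ^ j + k) ^ 2
      ≤ (3 * t * ((k : ℝ) + 1) ^ (-(H + 1 / 2)) * ((2 : ℝ) ^ j) ^ (H - 1)) ^ 2 := by
        rw [← sq_abs]
        exact pow_le_pow_left₀ (abs_nonneg _) (abs_gCoeff_two_pow_add_le_add_one hH₀ hH ht₀ hk) 2
    _ = 9 * t ^ 2 / (2 : ℝ) ^ (2 * (j : ℝ) * (1 - H)) * ((k : ℝ) + 1) ^ (-(2 * H + 1)) := by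
        rw [mul_pow, mul_pow, mul_pow, hpow, hpow']
        ring
    _ ≤ 9 / (2 : ℝ) ^ (2 * (j : ℝ) * (1 - H)) * ((k : ℝ) + 1) ^ (-(2 * H + 1)) := by
        gcongr
        nlinarith

/-- level-`j` bound for the squared coefficients `g_n(t,H)`. -/
theorem stmt19 :
    ∃ D : ℝ, 0 < D ∧
      ∀ H : ℝ, H ∈ Set.Ioo (0 : ℝ) 1 → H ≠ 1/2 →
      ∀ t : ℝ, t ∈ Set.Icc (0 : ℝ) 1 →
      ∀ j : ℕ,
        (∑ k ∈ Finset.range (2 ^ j), (gCoeff H t (2 ^ j + k)) ^ 2)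
          ≤ D / ((2 : ℝ) ^ (2 * (j : ℝ) * (1 - H)) * (H - 1/2) ^ 2)
              * ∑' ℓ : ℕ, ((ℓ : ℝ) + 1) ^ (-(2 * H + 1)) := by
  refine ⟨9 / 4, by norm_num, fun H hH hH_ne t ht j => ?_⟩
  set B : ℝ := (2 : ℝ) ^ (2 * (j : ℝ) * (1 - H))
  set u : ℕ → ℝ := fun ℓ => ((ℓ : ℝ) + 1) ^ (-(2 * H + 1))
  have hu_nonneg : ∀ ℓ, 0 ≤ u ℓ := fun ℓ => by positivity
  have hu : Summable u := by
    simpa [u] using (summable_nat_add_iff 1).2 (Real.summable_nat_rpow.2 (by linarith [hH.1] :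
      -(2 * H + 1) < -1))
  have hD : 9 / B ≤ 9 / 4 / (B * (H - 1 / 2) ^ 2) := by
    have hc : 0 < (H - 1 / 2) ^ 2 := sq_pos_of_ne_zero (sub_ne_zero.2 hH_ne)
    have hc' : 1 ≤ 1 / (4 * (H - 1 / 2) ^ 2) := by
      rw [le_div_iff₀ (mul_pos four_pos hc)]
      nlinarith [hH.1, hH.2]
    calc 9 / B ≤ 9 / B * (1 / (4 * (H - 1 / 2) ^ 2)) :=
          le_mul_of_one_le_right (by positivity) hc'
      _ = 9 / 4 / (B * (H - 1 / 2) ^ 2) := by field_simp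
  calc ∑ k ∈ Finset.range (2 ^ j), gCoeff H t (2 ^ j + k) ^ 2
      ≤ ∑ k ∈ Finset.range (2 ^ j), 9 / B * u k := Finset.sum_le_sum fun k hk =>
        sq_gCoeff_two_pow_add_le hH.1.le (by linarith [hH.2]) ht.1 ht.2 (Finset.mem_range.1 hk)
    _ = 9 / B * ∑ k ∈ Finset.range (2 ^ j), u k := (Finset.mul_sum _ _ _).symm
    _ ≤ 9 / B * ∑' ℓ, u ℓ := by
        gcongr
        exact hu.sum_le_tsum _ fun ℓ _ => hu_nonneg ℓ
    _ ≤ 9 / 4 / (B * (H - 1 / 2) ^ 2) * ∑' ℓ, u ℓ :=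
        mul_le_mul_of_nonneg_right hD (tsum_nonneg hu_nonneg)
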